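/- arXiv:2107.07098 — 2 statements merged into one kernel-verified Lean document; each statement's English description precedes it below -/
import Mathlib

section
/- Let p ∈ ℕ, a > 0, and b ∈ ℝ. Define the Hida-Matérn kernel k_{H,p}(τ; a, b) = cos(bτ) · m_p(τ; a), where m_p(τ; a) = e^{−a|τ|} · (p!/(2p)!) · Σ_{i=0}^{p} ((p+i)!/(i!(p−i)!)) (2a|τ|)^{p−i}. Then for every ω ∈ ℝ, ∫_ℝ k_{H,p}(τ; a, b) e^{−iωτ} dτ = (2a)^{2p+1} (p!)² / (2 · (2p)!) · [ ((ω − b)² + a²)^{−(p+1)} + ((ω + b)² + a²)^{−(p+1)} ]. In particular the Fourier transform of k_{H,p}(·; a, b) is nonnegative, real-valued, and even. -/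
/-!
Write `m_p(τ) = Σ_i c_i |τ|^{p-i} e^{-a|τ|}`. On each half-line `|τ|^k e^{-a|τ|} e^{-iωτ}` is a
Laplace integrand, so its Fourier transform is `k!/(a+iω)^{k+1} + k!/(a-iω)^{k+1}`, and the
factor `cos(bτ)` shifts the frequency by `±b`. With `x = a+iω`, `y = a-iω` (so `x+y = 2a`,
`xy = ω²+a²`) the sum collapses by
`Σ_{i≤p} C(p+i,i) (x+y)^{p-i} (x^i y^{p+1} + x^{p+1} y^i) = (x+y)^{2p+1}`,
whose two halves are the lower and the upper half of the binomial expansion of `(x+y)^{2p+1}`.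
-/

open MeasureTheory Real

/-- The Matérn kernel of half-integer order `ν = p + 1/2` with decay rate `a`. -/
noncomputable def maternKernel (p : ℕ) (a : ℝ) (τ : ℝ) : ℝ :=
  Real.exp (-a * |τ|) * ((p.factorial : ℝ) / ((2 * p).factorial : ℝ)) *
    ∑ i ∈ Finset.range (p + 1),
      (((p + i).factorial : ℝ) / ((i.factorial : ℝ) * ((p - i).factorial : ℝ))) *
        (2 * a * |τ|) ^ (p - i)

/-- The Hida-Matérn kernel with smoothness `p`, inverse length-scale `a`,
and frequency shift `b`. -/
noncomputable def hidaMaternKernel (p : ℕ) (a b : ℝ) (τ : ℝ) : ℝ :=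
  Real.cos (b * τ) * maternKernel p a τ

open Set Filter Topology Finset Complex
open scoped Nat

section BinomialTail

variable {R : Type*} [CommSemiring R] (x y : R)

theorem choose_succ_mul_pow_mul_pow (N m : ℕ) :
    ((N + 1).choose (m + 1) : R) * x ^ (m + 1) * y ^ (N - m) =
      x * ((N.choose m : R) * x ^ m * y ^ (N - m)) +
        y * ((N.choose (m + 1) : R) * x ^ (m + 1) * y ^ (N - (m + 1))) := by
  rw [Nat.choose_succ_succ', Nat.cast_add]
  rcases le_or_gt (m + 1) N with hmN | hNm
  · rw [show N - m = N - (m + 1) + 1 by omega, pow_succ]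
    ring
  · rw [Nat.choose_eq_zero_of_lt hNm, Nat.cast_zero]
    ring

theorem sum_range_choose_succ_mul_pow_mul_pow (N j : ℕ) :
    ∑ m ∈ range (j + 2), ((N + 1).choose m : R) * x ^ m * y ^ (N + 1 - m) =
      (x + y) * ∑ m ∈ range (j + 1), (N.choose m : R) * x ^ m * y ^ (N - m) +
        y * ((N.choose (j + 1) : R) * x ^ (j + 1) * y ^ (N - (j + 1))) := by
  set b : ℕ → R := fun m => (N.choose m : R) * x ^ m * y ^ (N - m)
  have hpascal : ∀ m, ((N + 1).choose (m + 1) : R) * x ^ (m + 1) * y ^ (N + 1 - (m + 1)) =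
      x * b m + y * b (m + 1) := fun m => by
    rw [Nat.add_sub_add_right]; exact choose_succ_mul_pow_mul_pow x y N m
  have hzero : ((N + 1).choose 0 : R) * x ^ 0 * y ^ (N + 1 - 0) = y * b 0 := by
    simp [b, pow_succ']
  rw [sum_range_succ', sum_congr rfl fun m _ => hpascal m, hzero, sum_add_distrib, ← mul_sum,
    ← mul_sum, add_assoc, ← mul_add, ← sum_range_succ' b, sum_range_succ b (j + 1)]
  ring

-- Sort the words of length `n + j + 1` with at most `j` letters `x` by the position of their
-- `(n + 1)`-st letter `y`.
theorem sum_range_choose_mul_pow_mul_add_pow (n j : ℕ) :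
    ∑ i ∈ range (j + 1), ((n + i).choose i : R) * x ^ i * y ^ (n + 1) * (x + y) ^ (j - i) =
      ∑ m ∈ range (j + 1), ((n + j + 1).choose m : R) * x ^ m * y ^ (n + j + 1 - m) := by
  induction j with
  | zero => simp
  | succ j ih =>
    have hshift : ∀ i ∈ range (j + 1),
        ((n + i).choose i : R) * x ^ i * y ^ (n + 1) * (x + y) ^ (j + 1 - i) =
          (x + y) * (((n + i).choose i : R) * x ^ i * y ^ (n + 1) * (x + y) ^ (j - i)) := by
      intro i hi
      rw [Nat.sub_add_comm (mem_range_succ_iff.mp hi), pow_succ]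
      ring
    rw [sum_range_succ, sum_congr rfl hshift, ← mul_sum, ih, ← add_assoc n j 1,
      sum_range_choose_succ_mul_pow_mul_pow, show n + j + 1 - (j + 1) = n by omega]
    simp only [Nat.sub_self, pow_zero, mul_one]
    ring

theorem sum_range_choose_mul_add_pow_mul (p : ℕ) :
    ∑ i ∈ range (p + 1), ((p + i).choose i : R) * (x + y) ^ (p - i) *
      (x ^ i * y ^ (p + 1) + x ^ (p + 1) * y ^ i) = (x + y) ^ (2 * p + 1) := by
  have hlower := sum_range_choose_mul_pow_mul_add_pow x y p p
  have hupper := sum_range_choose_mul_pow_mul_add_pow y x p p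
  rw [← two_mul] at hlower hupper
  rw [add_comm y x] at hupper
  have hsplit : ∀ i ∈ range (p + 1), ((p + i).choose i : R) * (x + y) ^ (p - i) *
      (x ^ i * y ^ (p + 1) + x ^ (p + 1) * y ^ i) =
        ((p + i).choose i : R) * x ^ i * y ^ (p + 1) * (x + y) ^ (p - i) +
          ((p + i).choose i : R) * y ^ i * x ^ (p + 1) * (x + y) ^ (p - i) :=
    fun i _ => by ring
  have hreflect :
      ∑ m ∈ range (p + 1), ((2 * p + 1).choose m : R) * y ^ m * x ^ (2 * p + 1 - m) =
        ∑ k ∈ range (p + 1), x ^ (p + 1 + k) * y ^ (2 * p + 1 - (p + 1 + k)) *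
          ((2 * p + 1).choose (p + 1 + k) : R) := by
    rw [← sum_range_reflect
      (fun m => ((2 * p + 1).choose m : R) * y ^ m * x ^ (2 * p + 1 - m))]
    refine sum_congr rfl fun k hk => ?_
    have hk := mem_range_succ_iff.mp hk
    rw [show p + 1 - 1 - k = p - k by omega, show 2 * p + 1 - (p + 1 + k) = p - k by omega,
      show 2 * p + 1 - (p - k) = p + 1 + k by omega,
      Nat.choose_symm_of_eq_add (show 2 * p + 1 = p - k + (p + 1 + k) by omega)]
    ring
  rw [sum_congr rfl hsplit, sum_add_distrib, hlower, hupper, hreflect, add_pow,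
    show 2 * p + 1 + 1 = (p + 1) + (p + 1) by omega, sum_range_add _ (p + 1) (p + 1)]
  congr 1
  exact sum_congr rfl fun m _ => by ring

end BinomialTail

theorem sum_range_choose_mul_add_pow_mul_inv_pow {K : Type*} [Field K] {x y : K} (hx : x ≠ 0)
    (hy : y ≠ 0) (p : ℕ) :
    ∑ i ∈ range (p + 1), ((p + i).choose i : K) * (x + y) ^ (p - i) *
      ((x ^ (p - i + 1))⁻¹ + (y ^ (p - i + 1))⁻¹) = (x + y) ^ (2 * p + 1) / (x * y) ^ (p + 1) := by
  rw [eq_div_iff (pow_ne_zero _ (mul_ne_zero hx hy)), sum_mul,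
    ← sum_range_choose_mul_add_pow_mul x y p]
  refine sum_congr rfl fun i hi => ?_
  have hip : p + 1 = p - i + 1 + i := by have := mem_range_succ_iff.mp hi; omega
  rw [mul_pow, hip, pow_add x, pow_add y]
  field_simp
  ring

theorem integrableOn_Ioi_pow_mul_exp_neg_mul {c : ℝ} (hc : 0 < c) (n : ℕ) :
    IntegrableOn (fun t : ℝ => t ^ n * Real.exp (-c * t)) (Ioi 0) := by
  simpa [Real.rpow_natCast] using integrableOn_rpow_mul_exp_neg_mul_rpow (s := n) (p := 1)
    (by linarith [n.cast_nonneg (α := ℝ)]) one_pos hc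

section Laplace

variable {z : ℂ}

theorem norm_pow_mul_cexp_neg_mul {t : ℝ} (ht : 0 ≤ t) (n : ℕ) :
    ‖(t : ℂ) ^ n * cexp (-(z * t))‖ = t ^ n * Real.exp (-z.re * t) := by
  simp [norm_exp, abs_of_nonneg ht]

theorem integrableOn_Ioi_pow_mul_cexp_neg_mul (hz : 0 < z.re) (n : ℕ) :
    IntegrableOn (fun t : ℝ => (t : ℂ) ^ n * cexp (-(z * t))) (Ioi 0) := by
  refine (integrableOn_Ioi_pow_mul_exp_neg_mul hz n).mono' (by fun_prop) ?_
  filter_upwards [ae_restrict_mem measurableSet_Ioi] with t ht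
  exact (norm_pow_mul_cexp_neg_mul (le_of_lt ht) n).le

theorem tendsto_pow_mul_cexp_neg_mul_atTop (hz : 0 < z.re) (n : ℕ) :
    Tendsto (fun t : ℝ => (t : ℂ) ^ n * cexp (-(z * t))) atTop (𝓝 0) := by
  rw [tendsto_zero_iff_norm_tendsto_zero]
  refine (tendsto_rpow_mul_exp_neg_mul_atTop_nhds_zero n z.re hz).congr' ?_
  filter_upwards [eventually_ge_atTop 0] with t ht
  rw [norm_pow_mul_cexp_neg_mul ht, Real.rpow_natCast]

theorem integral_Ioi_pow_mul_cexp_neg_mul (hz : 0 < z.re) (n : ℕ) :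
    ∫ t in Ioi (0 : ℝ), (t : ℂ) ^ n * cexp (-(z * t)) = n ! / z ^ (n + 1) := by
  have hz0 : z ≠ 0 := by rintro rfl; simp at hz
  induction n with
  | zero =>
    simpa [neg_mul, ← mul_neg, div_neg, neg_div] using
      integral_exp_mul_complex_Ioi (a := -z) (by simpa using hz) 0
  | succ n ih =>
    have hu : ∀ t : ℝ, HasDerivAt (fun t : ℝ => (t : ℂ) ^ (n + 1)) ((n + 1) * (t : ℂ) ^ n) t :=
      fun t => by simpa using (hasDerivAt_pow (n + 1) (t : ℂ)).comp_ofReal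
    have hv : ∀ t : ℝ, HasDerivAt (fun t : ℝ => -cexp (-(z * t)) / z) (cexp (-(z * t))) t :=
      fun t => by
        simpa [hz0] using
          (((hasDerivAt_id (t : ℂ)).const_mul z).neg.cexp.neg.div_const z).comp_ofReal
    have hu'v : IntegrableOn (fun t : ℝ => (n + 1) * (t : ℂ) ^ n * (-cexp (-(z * t)) / z))
        (Ioi 0) :=
      IntegrableOn.congr_fun ((integrableOn_Ioi_pow_mul_cexp_neg_mul hz n).const_mul (-(n + 1) / z))
        (fun t _ => by field_simp) measurableSet_Ioi
    have hzero : Tendsto (fun t : ℝ => (t : ℂ) ^ (n + 1) * (-cexp (-(z * t)) / z)) (𝓝[>] 0)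
        (𝓝 0) :=
      ((by fun_prop : Continuous fun t : ℝ => (t : ℂ) ^ (n + 1) * (-cexp (-(z * t)) / z)).tendsto
        0).mono_left nhdsWithin_le_nhds |>.trans_eq (by simp)
    have htop : Tendsto (fun t : ℝ => (t : ℂ) ^ (n + 1) * (-cexp (-(z * t)) / z)) atTop (𝓝 0) := by
      simpa [mul_div_assoc', neg_div] using
        ((tendsto_pow_mul_cexp_neg_mul_atTop hz (n + 1)).div_const z).neg
    have hparts := integral_Ioi_mul_deriv_eq_deriv_mul (fun t _ => hu t) (fun t _ => hv t)
      (integrableOn_Ioi_pow_mul_cexp_neg_mul hz (n + 1)) hu'v hzero htop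
    have hstep : ∫ t in Ioi (0 : ℝ), (n + 1) * (t : ℂ) ^ n * (-cexp (-(z * t)) / z) =
        -((n + 1) / z) * ∫ t in Ioi (0 : ℝ), (t : ℂ) ^ n * cexp (-(z * t)) := by
      rw [← integral_const_mul]
      congr 1 with t
      ring
    rw [hparts, hstep, ih, Nat.factorial_succ]
    push_cast
    field_simp
    ring

end Laplace

theorem integral_eq_setIntegral_Ioi_add_setIntegral_Ioi_comp_neg {E : Type*}
    [NormedAddCommGroup E] [NormedSpace ℝ E] {f : ℝ → E} (hf : Integrable f) :
    ∫ x, f x = (∫ x in Ioi 0, f x) + ∫ x in Ioi 0, f (-x) := by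
  rw [integral_comp_neg_Ioi, neg_zero, add_comm,
    intervalIntegral.integral_Iic_add_Ioi hf.integrableOn hf.integrableOn]

theorem integrable_abs_pow_mul_exp_neg_mul_abs {a : ℝ} (ha : 0 < a) (k : ℕ) :
    Integrable (fun τ : ℝ => |τ| ^ k * Real.exp (-a * |τ|)) := by
  have hIoi : IntegrableOn (fun τ : ℝ => |τ| ^ k * Real.exp (-a * |τ|)) (Ioi 0) :=
    (integrableOn_Ioi_pow_mul_exp_neg_mul ha k).congr_fun
      (fun t ht => by simp only [abs_of_pos (mem_Ioi.mp ht)]) measurableSet_Ioi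
  exact LocallyIntegrable.integrable_of_isBigO_atTop_of_norm_isNegInvariant
    (Continuous.locallyIntegrable (by fun_prop)) (Eventually.of_forall fun τ => by simp)
    (Asymptotics.isBigO_refl _ _) ⟨Ioi 0, Ioi_mem_atTop 0, hIoi⟩

/-- Fourier transform in the angular-frequency convention `e^{-iωτ}` of the paper; Mathlib's `𝓕`
uses `e^{-2πiξx}`. -/
noncomputable def spectralDensity (k : ℝ → ℝ) (ω : ℝ) : ℂ :=
  ∫ τ, (k τ : ℂ) * cexp (-I * ω * τ)

theorem integrable_ofReal_mul_cexp_neg_I_mul {g : ℝ → ℝ} (hg : Integrable g) (ω : ℝ) :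
    Integrable (fun τ : ℝ => (g τ : ℂ) * cexp (-I * ω * τ)) :=
  hg.ofReal.mul_bdd (c := 1) (by fun_prop) (Eventually.of_forall fun τ => by simp [norm_exp])

theorem spectralDensity_cos_mul {g : ℝ → ℝ} (hg : Integrable g) (b ω : ℝ) :
    spectralDensity (fun τ => Real.cos (b * τ) * g τ) ω =
      (spectralDensity g (ω - b) + spectralDensity g (ω + b)) / 2 := by
  have hmod : ∀ τ : ℝ, ((Real.cos (b * τ) * g τ : ℝ) : ℂ) * cexp (-I * ω * τ) =
      ((g τ : ℂ) * cexp (-I * (ω - b : ℝ) * τ) + (g τ : ℂ) * cexp (-I * (ω + b : ℝ) * τ)) / 2 := by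
    intro τ
    have hsub : cexp (-I * (ω - b : ℝ) * τ) = cexp (b * τ * I) * cexp (-I * ω * τ) := by
      rw [← Complex.exp_add]; push_cast; ring_nf
    have hadd : cexp (-I * (ω + b : ℝ) * τ) = cexp (-(b * τ) * I) * cexp (-I * ω * τ) := by
      rw [← Complex.exp_add]; push_cast; ring_nf
    rw [hsub, hadd, ofReal_mul, ofReal_cos, Complex.cos]
    push_cast
    ring
  simp only [spectralDensity, hmod]
  rw [integral_div, integral_add (integrable_ofReal_mul_cexp_neg_I_mul hg _)
    (integrable_ofReal_mul_cexp_neg_I_mul hg _)]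

theorem spectralDensity_sum_mul {ι : Type*} (s : Finset ι) (c : ι → ℝ) {g : ι → ℝ → ℝ}
    (hg : ∀ i ∈ s, Integrable (g i)) (ω : ℝ) :
    spectralDensity (fun τ => ∑ i ∈ s, c i * g i τ) ω =
      ∑ i ∈ s, c i * spectralDensity (g i) ω := by
  have hint : ∀ i ∈ s, Integrable fun τ : ℝ => (c i : ℂ) * (g i τ : ℂ) * cexp (-I * ω * τ) :=
    fun i hi => by
      simpa only [mul_assoc] using (integrable_ofReal_mul_cexp_neg_I_mul (hg i hi) ω).const_mul _
  simp only [spectralDensity, ofReal_sum, ofReal_mul, sum_mul]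
  rw [integral_finsetSum s hint]
  simp only [mul_assoc, integral_const_mul]

theorem spectralDensity_abs_pow_mul_exp_neg_mul_abs {a : ℝ} (ha : 0 < a) (k : ℕ) (ω : ℝ) :
    spectralDensity (fun τ => |τ| ^ k * Real.exp (-a * |τ|)) ω =
      k ! / (a + ω * I) ^ (k + 1) + k ! / (a - ω * I) ^ (k + 1) := by
  rw [spectralDensity, integral_eq_setIntegral_Ioi_add_setIntegral_Ioi_comp_neg
    (integrable_ofReal_mul_cexp_neg_I_mul (integrable_abs_pow_mul_exp_neg_mul_abs ha k) ω),
    ← integral_Ioi_pow_mul_cexp_neg_mul (z := a + ω * I) (by simpa using ha),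
    ← integral_Ioi_pow_mul_cexp_neg_mul (z := a - ω * I) (by simpa using ha)]
  congr 1 <;> refine setIntegral_congr_fun measurableSet_Ioi fun t ht => ?_
  all_goals
    simp only [abs_neg, abs_of_pos (mem_Ioi.mp ht)]
    rw [ofReal_mul, ofReal_exp, mul_assoc, ← Complex.exp_add]
    push_cast
    ring_nf

theorem maternKernel_eq_sum (p : ℕ) (a τ : ℝ) :
    maternKernel p a τ = ∑ i ∈ range (p + 1),
      (p ! / (2 * p)! * ((p + i)! / (i ! * (p - i)!)) * (2 * a) ^ (p - i)) *
        (|τ| ^ (p - i) * Real.exp (-a * |τ|)) := by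
  simp only [maternKernel, mul_sum, mul_pow]
  exact sum_congr rfl fun i _ => by ring

theorem integrable_maternKernel {a : ℝ} (ha : 0 < a) (p : ℕ) : Integrable (maternKernel p a) := by
  rw [funext (maternKernel_eq_sum p a)]
  exact integrable_finsetSum _ fun i _ =>
    (integrable_abs_pow_mul_exp_neg_mul_abs ha _).const_mul _

theorem spectralDensity_maternKernel {a : ℝ} (ha : 0 < a) (p : ℕ) (ω : ℝ) :
    spectralDensity (maternKernel p a) ω =
      ((2 * a) ^ (2 * p + 1) * p ! ^ 2 / (2 * p)! * ((ω ^ 2 + a ^ 2) ^ (p + 1))⁻¹ : ℝ) := by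
  rw [funext (maternKernel_eq_sum p a),
    spectralDensity_sum_mul _ _ fun i _ => integrable_abs_pow_mul_exp_neg_mul_abs ha _]
  simp only [spectralDensity_abs_pow_mul_exp_neg_mul_abs ha]
  set x : ℂ := a + ω * I
  set y : ℂ := a - ω * I
  have hx : x ≠ 0 := fun h => by simpa [x, ha.ne'] using congrArg re h
  have hy : y ≠ 0 := fun h => by simpa [y, ha.ne'] using congrArg re h
  have hsum : x + y = 2 * a := by ring
  have hprod : x * y = ω ^ 2 + a ^ 2 := by linear_combination (-(ω : ℂ) ^ 2) * I_sq
  have hterm : ∀ i ∈ range (p + 1),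
      ((p ! / (2 * p)! * ((p + i)! / (i ! * (p - i)!)) * (2 * a) ^ (p - i) : ℝ) : ℂ) *
          ((p - i)! / x ^ (p - i + 1) + (p - i)! / y ^ (p - i + 1)) =
        (p ! ^ 2 / (2 * p)! : ℂ) * (((p + i).choose i : ℂ) * (x + y) ^ (p - i) *
          ((x ^ (p - i + 1))⁻¹ + (y ^ (p - i + 1))⁻¹)) := by
    intro i _
    have hfac : ((p + i)! : ℂ) = (p + i).choose i * p ! * i ! := by
      exact_mod_cast (Nat.add_choose_mul_factorial_mul_factorial p i).symm
    have hi : (i ! : ℂ) ≠ 0 := by exact_mod_cast i.factorial_ne_zero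
    have hpi : ((p - i)! : ℂ) ≠ 0 := by exact_mod_cast (p - i).factorial_ne_zero
    rw [hsum]
    push_cast
    rw [hfac]
    field_simp
  rw [sum_congr rfl hterm, ← mul_sum, sum_range_choose_mul_add_pow_mul_inv_pow hx hy, hsum, hprod]
  push_cast
  ring

/-- The Fourier transform of the Hida-Matérn kernel is the (nonnegative, real-valued,
even) power spectral density
`(2a)^{2p+1} (p!)² / (2·(2p)!) · [((ω-b)² + a²)^{-(p+1)} + ((ω+b)² + a²)^{-(p+1)}]`. -/
theorem fourier_hidaMatern (p : ℕ) (a b : ℝ) (ha : 0 < a) :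
    ∀ ω : ℝ,
      (∫ τ : ℝ, (hidaMaternKernel p a b τ : ℂ) * Complex.exp (-Complex.I * ω * τ)
        = (((2 * a) ^ (2 * p + 1) * (p.factorial : ℝ) ^ 2 / (2 * ((2 * p).factorial : ℝ)) *
            ((((ω - b) ^ 2 + a ^ 2) ^ (p + 1))⁻¹ + (((ω + b) ^ 2 + a ^ 2) ^ (p + 1))⁻¹) : ℝ) : ℂ))
      ∧ 0 ≤ (2 * a) ^ (2 * p + 1) * (p.factorial : ℝ) ^ 2 / (2 * ((2 * p).factorial : ℝ)) *
            ((((ω - b) ^ 2 + a ^ 2) ^ (p + 1))⁻¹ + (((ω + b) ^ 2 + a ^ 2) ^ (p + 1))⁻¹)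
      ∧ (2 * a) ^ (2 * p + 1) * (p.factorial : ℝ) ^ 2 / (2 * ((2 * p).factorial : ℝ)) *
            ((((-ω - b) ^ 2 + a ^ 2) ^ (p + 1))⁻¹ + (((-ω + b) ^ 2 + a ^ 2) ^ (p + 1))⁻¹)
        = (2 * a) ^ (2 * p + 1) * (p.factorial : ℝ) ^ 2 / (2 * ((2 * p).factorial : ℝ)) *
            ((((ω - b) ^ 2 + a ^ 2) ^ (p + 1))⁻¹ + (((ω + b) ^ 2 + a ^ 2) ^ (p + 1))⁻¹) := by
  intro ω
  refine ⟨?_, by positivity, by ring_nf⟩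
  change spectralDensity (fun τ => Real.cos (b * τ) * maternKernel p a τ) ω = _
  rw [spectralDensity_cos_mul (integrable_maternKernel ha p), spectralDensity_maternKernel ha,
    spectralDensity_maternKernel ha]
  push_cast
  ring
end

section
/- Let p ∈ ℕ, b ∈ ℝ, and τ ∈ ℝ be fixed. Then lim_{a → 0⁺} k_{H,p}(τ; a, b) = cos(bτ), where k_{H,p}(τ; a, b) = cos(bτ) · e^{−a|τ|} · (p!/(2p)!) · Σ_{i=0}^{p} ((p+i)!/(i!(p−i)!)) (2a|τ|)^{p−i}. That is, the cosine (spectral delta) kernel is the pointwise limit of Hida-Matérn kernels as the inverse length-scale a tends to zero. -/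
open Real Filter Topology

/-! The Matérn kernel is a polynomial in `a` times `exp (-a |τ|)`, hence continuous in `a`; at
`a = 0` only the term `i = p` of the sum survives, and it cancels the normalising constant. -/

lemma continuous_maternKernel (p : ℕ) (τ : ℝ) : Continuous fun a => maternKernel p a τ := by
  unfold maternKernel
  fun_prop

lemma maternKernel_zero (p : ℕ) (τ : ℝ) : maternKernel p 0 τ = 1 := by
  have hsum : ∑ i ∈ Finset.range (p + 1),
      (((p + i).factorial : ℝ) / ((i.factorial : ℝ) * ((p - i).factorial : ℝ))) *
        (2 * (0 : ℝ) * |τ|) ^ (p - i) = ((2 * p).factorial : ℝ) / p.factorial := by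
    rw [Finset.sum_eq_single_of_mem p (Finset.self_mem_range_succ p)]
    · simp [two_mul]
    · intro i hi hip
      have : p - i ≠ 0 := by
        have := Finset.mem_range_succ_iff.mp hi
        omega
      simp [this]
  have h2p : ((2 * p).factorial : ℝ) ≠ 0 := by positivity
  have hp : (p.factorial : ℝ) ≠ 0 := by positivity
  rw [maternKernel, hsum]
  field_simp
  simp

lemma tendsto_maternKernel_zero (p : ℕ) (τ : ℝ) :
    Tendsto (fun a => maternKernel p a τ) (𝓝 0) (𝓝 1) := by
  simpa only [maternKernel_zero] using (continuous_maternKernel p τ).tendsto 0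

/-- The cosine (spectral delta) kernel is the pointwise limit of Hida-Matérn kernels as
the inverse length-scale `a` tends to `0⁺`. -/
theorem hidaMatern_tendsto_cosine (p : ℕ) (b τ : ℝ) :
    Filter.Tendsto (fun a : ℝ => hidaMaternKernel p a b τ)
      (nhdsWithin 0 (Set.Ioi 0)) (nhds (Real.cos (b * τ))) := by
  have h := (tendsto_maternKernel_zero p τ).const_mul (Real.cos (b * τ))
  rw [mul_one] at h
  exact h.mono_left nhdsWithin_le_nhds
end
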